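/- arXiv:2311.04656 — 2 statements merged into one kernel-verified Lean document; each statement's English description precedes it below -/
import Mathlib

section
/- For every finite simple graph G, the following are equivalent: (i) G has no pivot-minor isomorphic to P₄; (ii) G has no pivot-minor isomorphic to C₄; (iii) G has no induced subgraph isomorphic to P₄, C₄ or the dart; (iv) every connected component of G is a clique-star. -/
/-!  Basic notions: local complementation, edge pivot, pivot-equivalence, pivot-minors. -/

variable {V : Type*} {W : Type*}

/-- Local complementation at a vertex `u`: complement the adjacency inside the
neighbourhood of `u`. -/
def localComp (G : SimpleGraph V) (u : V) : SimpleGraph V where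
  Adj x y := x ≠ y ∧
    ((G.Adj u x ∧ G.Adj u y ∧ ¬ G.Adj x y) ∨ (¬ (G.Adj u x ∧ G.Adj u y) ∧ G.Adj x y))
  symm := by
    constructor
    intro x y h
    obtain ⟨hne, h⟩ := h
    refine ⟨hne.symm, ?_⟩
    rw [G.adj_comm y x]
    tauto
  loopless := by
    constructor
    intro x h
    exact h.1 rfl

/-- The edge pivot `G ∧ uv = ((G * u) * v) * u`. -/
def pivotEdge (G : SimpleGraph V) (u v : V) : SimpleGraph V :=
  localComp (localComp (localComp G u) v) u

/-- One pivot step: pivoting along an edge of the graph. -/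
def PivotStep (G G' : SimpleGraph V) : Prop :=
  ∃ u v, G.Adj u v ∧ G' = pivotEdge G u v

/-- Two graphs on the same vertex set are pivot-equivalent if one can be obtained
from the other by a sequence of edge pivots. -/
def PivotEquiv (G G' : SimpleGraph V) : Prop :=
  Relation.ReflTransGen PivotStep G G'

/-- `H` is a pivot-minor of `G` on the vertex subset `s`: `H` is obtained (up to
isomorphism) from `G` by a sequence of edge pivots and deletions of the vertices
outside `s`.  Since pivoting an edge commutes with deleting a vertex not on that
edge, this is equivalent to performing all the edge pivots first and then deleting
the vertices outside `s`, which is how we state it. -/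
def HasPivotMinorOn (G : SimpleGraph V) (s : Set V) (H : SimpleGraph W) : Prop :=
  ∃ G' : SimpleGraph V, PivotEquiv G G' ∧ Nonempty ((G'.induce s) ≃g H)

/-- `G` contains a pivot-minor isomorphic to `H`. -/
def HasPivotMinor (G : SimpleGraph V) (H : SimpleGraph W) : Prop :=
  ∃ s : Set V, HasPivotMinorOn G s H

/-- `G'` is a result of contracting the vertex `v` in `G` (denoted `G/v`):
if `v` is isolated this is `G - v`, and otherwise it is `(G ∧ zv) - v`
for some neighbour `z` of `v` (well defined up to pivot-equivalence). -/
def IsContraction (G : SimpleGraph V) (v : V) (G' : SimpleGraph ↥{u : V | u ≠ v}) : Prop :=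
  ((∀ z, ¬ G.Adj v z) ∧ G' = G.induce {u : V | u ≠ v}) ∨
    (∃ z, G.Adj v z ∧ G' = (pivotEdge G z v).induce {u : V | u ≠ v})

/-- `G` is `H`-pivot-unique: `G` contains a pivot-minor isomorphic to `H` and for
every vertex `v`, at most one of `G - v` and `G / v` contains a pivot-minor
isomorphic to `H`. -/
def PivotUnique (G : SimpleGraph V) (H : SimpleGraph W) : Prop :=
  HasPivotMinor G H ∧
    ∀ v : V, ¬ (HasPivotMinor (G.induce {u : V | u ≠ v}) H ∧
      ∃ G' : SimpleGraph ↥{u : V | u ≠ v}, IsContraction G v G' ∧ HasPivotMinor G' H)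

/-- `G` contains an induced subgraph isomorphic to `H`. -/
def HasInducedSubgraphIso (G : SimpleGraph V) (H : SimpleGraph W) : Prop :=
  ∃ s : Set V, Nonempty ((G.induce s) ≃g H)

/-- The dart: the diamond on `{0,1,2,3}` (all edges except `2-3`) together with a
pendant vertex `4` attached to the degree-3 vertex `0`. -/
def dart : SimpleGraph (Fin 5) :=
  SimpleGraph.fromRel (fun x y =>
    (x.val = 0 ∧ y.val = 1) ∨ (x.val = 0 ∧ y.val = 2) ∨ (x.val = 0 ∧ y.val = 3) ∨
    (x.val = 1 ∧ y.val = 2) ∨ (x.val = 1 ∧ y.val = 3) ∨ (x.val = 0 ∧ y.val = 4))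

/-- A graph is a clique-star if it is a complete graph, or its vertex set can be
partitioned into pairwise disjoint nonempty cliques `K, L₁, …, L_p` (`p ≥ 1`) such
that every vertex of `K` is adjacent to every vertex of `L₁ ∪ ⋯ ∪ L_p` and there
are no edges between distinct cliques `Lᵢ` and `Lⱼ`. -/
def IsCliqueStar {V : Type*} (G : SimpleGraph V) : Prop :=
  G = ⊤ ∨
    ∃ (K : Set V) (Ls : Set (Set V)),
      K.Nonempty ∧ Ls.Nonempty ∧ (∀ L ∈ Ls, L.Nonempty) ∧
      K ∪ ⋃₀ Ls = Set.univ ∧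
      (∀ L ∈ Ls, Disjoint K L) ∧
      (∀ L₁ ∈ Ls, ∀ L₂ ∈ Ls, L₁ ≠ L₂ → Disjoint L₁ L₂) ∧
      G.IsClique K ∧ (∀ L ∈ Ls, G.IsClique L) ∧
      (∀ x ∈ K, ∀ y ∈ ⋃₀ Ls, G.Adj x y) ∧
      (∀ L₁ ∈ Ls, ∀ L₂ ∈ Ls, L₁ ≠ L₂ → ∀ x ∈ L₁, ∀ y ∈ L₂, ¬ G.Adj x y)

/-!
Pivoting the middle edge of an induced `P₄` yields an induced `C₄`, pivoting an edge of an
induced `C₄` yields an induced `P₄`, and pivoting the edge between the two vertices of degree at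
least three of an induced dart yields an induced `C₄`. So all three conditions on pivot-minors
reduce to showing that the class of graphs without induced `P₄`, `C₄` and dart is closed under
pivoting.

In a connected graph of this class, the middle vertex of every induced `P₃` is universal; this
forces the graph to be a clique-star, and conversely. A clique-star is a partition into cliques
(cells) with one cell, the centre, joined to everything. Pivoting an edge inside a cell changes
nothing, and pivoting an edge from the centre to another cell just makes that cell the new
centre; components not containing the pivot edge are untouched.
-/

open SimpleGraph

section Pivot

variable {G : SimpleGraph V} {u v x y : V}

@[simp] lemma localComp_adj : (localComp G u).Adj x y ↔ x ≠ y ∧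
    ((G.Adj u x ∧ G.Adj u y ∧ ¬ G.Adj x y) ∨ (¬ (G.Adj u x ∧ G.Adj u y) ∧ G.Adj x y)) :=
  Iff.rfl

lemma localComp_induce {s : Set V} (hu : u ∈ s) :
    (localComp G u).induce s = localComp (G.induce s) ⟨u, hu⟩ := by
  ext x y
  simp [Subtype.ext_iff]

lemma pivotEdge_induce {s : Set V} (hu : u ∈ s) (hv : v ∈ s) :
    (pivotEdge G u v).induce s = pivotEdge (G.induce s) ⟨u, hu⟩ ⟨v, hv⟩ := by
  simp only [pivotEdge, localComp_induce hu, localComp_induce hv]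

/-- Pivoting `uv` toggles the adjacency of `x` and `y` (both outside `{u, v}`) exactly when they
lie in two different ones of the three sets `N(u) \ N(v)`, `N(v) \ N(u)`, `N(u) ∩ N(v)`. -/
def PivotToggles (G : SimpleGraph V) (u v x y : V) : Prop :=
  (G.Adj u x ∨ G.Adj v x) ∧ (G.Adj u y ∨ G.Adj v y) ∧
    ¬ ((G.Adj u x ↔ G.Adj u y) ∧ (G.Adj v x ↔ G.Adj v y))

lemma pivotToggles_comm : PivotToggles G v u x y ↔ PivotToggles G u v x y := by
  unfold PivotToggles
  tauto

lemma pivotEdge_adj_self (huv : G.Adj u v) : (pivotEdge G u v).Adj u v := by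
  simp [pivotEdge, huv, huv.symm, huv.ne]

lemma pivotEdge_adj_left (huv : G.Adj u v) (hyu : y ≠ u) (hyv : y ≠ v) :
    (pivotEdge G u v).Adj u y ↔ G.Adj v y := by
  by_cases G.Adj u y <;> by_cases G.Adj v y <;>
    simp_all [pivotEdge, huv.symm, huv.ne', hyu.symm, hyv.symm]

lemma pivotEdge_adj_right (huv : G.Adj u v) (hyu : y ≠ u) (hyv : y ≠ v) :
    (pivotEdge G u v).Adj v y ↔ G.Adj u y := by
  by_cases G.Adj u y <;> by_cases G.Adj v y <;>
    simp_all [pivotEdge, huv.symm, huv.ne, huv.ne', hyu.symm, hyv.symm]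

lemma pivotEdge_adj_of_ne (huv : G.Adj u v) (hxu : x ≠ u) (hxv : x ≠ v) (hyu : y ≠ u)
    (hyv : y ≠ v) (hxy : x ≠ y) :
    (pivotEdge G u v).Adj x y ↔ Xor (G.Adj x y) (PivotToggles G u v x y) := by
  unfold PivotToggles Xor
  by_cases G.Adj u x <;> by_cases G.Adj u y <;> by_cases G.Adj v x <;>
    by_cases G.Adj v y <;> by_cases G.Adj x y <;>
    simp_all [pivotEdge, huv.symm, huv.ne', hxu.symm, hxv.symm, hyu.symm, hyv.symm]

lemma pivotEdge_eq_of_adj_iff (huv : G.Adj u v) {G' : SimpleGraph V} (h_uv : G'.Adj u v)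
    (h_u : ∀ y, y ≠ u → y ≠ v → (G'.Adj u y ↔ G.Adj v y))
    (h_v : ∀ y, y ≠ u → y ≠ v → (G'.Adj v y ↔ G.Adj u y))
    (h : ∀ x y, x ≠ u → x ≠ v → y ≠ u → y ≠ v → x ≠ y →
      (G'.Adj x y ↔ Xor (G.Adj x y) (PivotToggles G u v x y))) :
    pivotEdge G u v = G' := by
  ext x y
  rcases eq_or_ne x y with rfl | hxy
  · simp
  rcases eq_or_ne x u with rfl | hxu
  · rcases eq_or_ne y v with rfl | hyv
    · simp [pivotEdge_adj_self huv, h_uv]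
    · rw [pivotEdge_adj_left huv hxy.symm hyv, h_u y hxy.symm hyv]
  rcases eq_or_ne x v with rfl | hxv
  · rcases eq_or_ne y u with rfl | hyu
    · simp [(pivotEdge_adj_self huv).symm, h_uv.symm]
    · rw [pivotEdge_adj_right huv hyu hxy.symm, h_v y hyu hxy.symm]
  rcases eq_or_ne y u with rfl | hyu
  · rw [adj_comm, G'.adj_comm, pivotEdge_adj_left huv hxu hxv, h_u x hxu hxv]
  rcases eq_or_ne y v with rfl | hyv
  · rw [adj_comm, G'.adj_comm, pivotEdge_adj_right huv hxu hxv, h_v x hxu hxv]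
  rw [pivotEdge_adj_of_ne huv hxu hxv hyu hyv hxy, h x y hxu hxv hyu hyv hxy]

lemma pivotEdge_comm (huv : G.Adj u v) : pivotEdge G u v = pivotEdge G v u :=
  pivotEdge_eq_of_adj_iff huv (pivotEdge_adj_self huv.symm).symm
    (fun _ hyu hyv ↦ pivotEdge_adj_right huv.symm hyv hyu)
    (fun _ hyu hyv ↦ pivotEdge_adj_left huv.symm hyv hyu)
    (fun _ _ hxu hxv hyu hyv hxy ↦ by
      rw [pivotEdge_adj_of_ne huv.symm hxv hxu hyv hyu hxy, pivotToggles_comm])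

lemma pivotEdge_eq_self (huv : G.Adj u v)
    (htwin : ∀ w, w ≠ u → w ≠ v → (G.Adj u w ↔ G.Adj v w)) : pivotEdge G u v = G :=
  pivotEdge_eq_of_adj_iff huv huv (fun y hyu hyv ↦ htwin y hyu hyv)
    (fun y hyu hyv ↦ (htwin y hyu hyv).symm)
    (fun x y hxu hxv hyu hyv _ ↦ by
      unfold PivotToggles Xor
      rw [htwin x hxu hxv, htwin y hyu hyv]
      tauto)

lemma pivotEdge_adj_of_not_adj (huv : G.Adj u v) (hux : ¬ G.Adj u x) (hvx : ¬ G.Adj v x) :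
    (pivotEdge G u v).Adj x y ↔ G.Adj x y := by
  have hxu : x ≠ u := by rintro rfl; exact hvx huv.symm
  have hxv : x ≠ v := by rintro rfl; exact hux huv
  rcases eq_or_ne y u with rfl | hyu
  · rw [adj_comm, pivotEdge_adj_left huv hxu hxv, adj_comm]
    tauto
  rcases eq_or_ne y v with rfl | hyv
  · rw [adj_comm, pivotEdge_adj_right huv hxu hxv, adj_comm]
    tauto
  rcases eq_or_ne x y with rfl | hxy
  · simp
  rw [pivotEdge_adj_of_ne huv hxu hxv hyu hyv hxy]
  simp [Xor, PivotToggles, hux, hvx]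

end Pivot

section Patterns

variable {G : SimpleGraph V}

def IsInducedP4 (G : SimpleGraph V) (a b c d : V) : Prop :=
  G.Adj a b ∧ G.Adj b c ∧ G.Adj c d ∧ ¬ G.Adj a c ∧ ¬ G.Adj a d ∧ ¬ G.Adj b d ∧
    a ≠ c ∧ a ≠ d ∧ b ≠ d

def IsInducedC4 (G : SimpleGraph V) (a b c d : V) : Prop :=
  G.Adj a b ∧ G.Adj b c ∧ G.Adj c d ∧ G.Adj d a ∧ ¬ G.Adj a c ∧ ¬ G.Adj b d ∧ a ≠ c ∧ b ≠ d

/-- The vertices are listed as in `dart`: `a₀` is the vertex of degree 4 and `a₄` the pendant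
vertex. -/
def IsInducedDart (G : SimpleGraph V) (a₀ a₁ a₂ a₃ a₄ : V) : Prop :=
  G.Adj a₀ a₁ ∧ G.Adj a₀ a₂ ∧ G.Adj a₀ a₃ ∧ G.Adj a₁ a₂ ∧ G.Adj a₁ a₃ ∧ G.Adj a₀ a₄ ∧
    ¬ G.Adj a₂ a₃ ∧ ¬ G.Adj a₁ a₄ ∧ ¬ G.Adj a₂ a₄ ∧ ¬ G.Adj a₃ a₄ ∧
    a₂ ≠ a₃ ∧ a₁ ≠ a₄ ∧ a₂ ≠ a₄ ∧ a₃ ≠ a₄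

lemma isIndContained_of_adj_iff {H : SimpleGraph W} (f : W → V) (hf : f.Injective)
    (h : ∀ i j, G.Adj (f i) (f j) ↔ H.Adj i j) : H ⊴ G :=
  ⟨⟨⟨f, hf⟩, h _ _⟩⟩

lemma pathGraph_four_isIndContained_iff :
    pathGraph 4 ⊴ G ↔ ∃ a b c d, IsInducedP4 G a b c d := by
  constructor
  · rintro ⟨f⟩
    refine ⟨f 0, f 1, f 2, f 3, ?_⟩
    simp only [IsInducedP4, f.map_adj_iff, f.injective.ne_iff, pathGraph_adj]
    decide
  · rintro ⟨a, b, c, d, hab, hbc, hcd, hac, had, hbd, hac', had', hbd'⟩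
    have := hab.ne; have := hbc.ne; have := hcd.ne
    refine isIndContained_of_adj_iff ![a, b, c, d] (fun i j ↦ ?_) (fun i j ↦ ?_) <;>
      fin_cases i <;> fin_cases j <;> simp_all [pathGraph_adj, adj_comm, ne_comm]

lemma cycleGraph_four_isIndContained_iff :
    cycleGraph 4 ⊴ G ↔ ∃ a b c d, IsInducedC4 G a b c d := by
  constructor
  · rintro ⟨f⟩
    refine ⟨f 0, f 1, f 2, f 3, ?_⟩
    simp only [IsInducedC4, f.map_adj_iff, f.injective.ne_iff, cycleGraph_adj]
    decide
  · rintro ⟨a, b, c, d, hab, hbc, hcd, hda, hac, hbd, hac', hbd'⟩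
    have := hab.ne; have := hbc.ne; have := hcd.ne; have := hda.ne
    refine isIndContained_of_adj_iff ![a, b, c, d] (fun i j ↦ ?_) (fun i j ↦ ?_) <;>
      fin_cases i <;> fin_cases j <;> simp_all [cycleGraph_adj, adj_comm, ne_comm] <;> decide

lemma dart_isIndContained_iff :
    dart ⊴ G ↔ ∃ a₀ a₁ a₂ a₃ a₄, IsInducedDart G a₀ a₁ a₂ a₃ a₄ := by
  constructor
  · rintro ⟨f⟩
    refine ⟨f 0, f 1, f 2, f 3, f 4, ?_⟩
    simp only [IsInducedDart, f.map_adj_iff, f.injective.ne_iff]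
    simp [dart]
  · rintro ⟨a₀, a₁, a₂, a₃, a₄, h01, h02, h03, h12, h13, h04, h23, h14, h24, h34,
      h23', h14', h24', h34'⟩
    have := h01.ne; have := h02.ne; have := h03.ne; have := h12.ne; have := h13.ne
    have := h04.ne
    refine isIndContained_of_adj_iff ![a₀, a₁, a₂, a₃, a₄] (fun i j ↦ ?_) (fun i j ↦ ?_) <;>
      fin_cases i <;> fin_cases j <;> simp_all [dart, adj_comm, ne_comm]

lemma dart_preconnected : dart.Preconnected := by
  have h : ∀ i, dart.Reachable 0 i := by
    intro i
    fin_cases i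
    · rfl
    all_goals exact Adj.reachable (by simp [dart])
  exact fun i j ↦ (h i).symm.trans (h j)

end Patterns

section PivotPatterns

variable {G : SimpleGraph V} {a b c d e : V}

lemma IsInducedP4.isInducedC4_pivotEdge (h : IsInducedP4 G a b c d) :
    IsInducedC4 (pivotEdge G b c) a c b d := by
  obtain ⟨hab, hbc, hcd, hac, had, hbd, hac', had', hbd'⟩ := h
  have := hab.ne; have := hbc.ne; have := hcd.ne
  simp_all [IsInducedC4, pivotEdge, adj_comm]

lemma IsInducedC4.isInducedP4_pivotEdge (h : IsInducedC4 G a b c d) :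
    IsInducedP4 (pivotEdge G a b) c a b d := by
  obtain ⟨hab, hbc, hcd, hda, hac, hbd, hac', hbd'⟩ := h
  have := hab.ne; have := hbc.ne; have := hcd.ne; have := hda.ne
  simp_all [IsInducedP4, pivotEdge, adj_comm, ne_comm]

lemma IsInducedDart.isInducedC4_pivotEdge (h : IsInducedDart G a b c d e) :
    IsInducedC4 (pivotEdge G a b) a c e d := by
  obtain ⟨h01, h02, h03, h12, h13, h04, h23, h14, h24, h34, h23', h14', h24', h34'⟩ := h
  have := h01.ne; have := h02.ne; have := h03.ne; have := h12.ne; have := h13.ne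
  have := h04.ne
  simp_all [IsInducedC4, pivotEdge, adj_comm]

lemma exists_pivotStep_cycleGraph_four_of_pathGraph (h : pathGraph 4 ⊴ G) :
    ∃ G', PivotStep G G' ∧ cycleGraph 4 ⊴ G' := by
  obtain ⟨a, b, c, d, hP⟩ := pathGraph_four_isIndContained_iff.1 h
  exact ⟨_, ⟨b, c, hP.2.1, rfl⟩,
    cycleGraph_four_isIndContained_iff.2 ⟨a, c, b, d, hP.isInducedC4_pivotEdge⟩⟩

lemma exists_pivotStep_pathGraph_four_of_cycleGraph (h : cycleGraph 4 ⊴ G) :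
    ∃ G', PivotStep G G' ∧ pathGraph 4 ⊴ G' := by
  obtain ⟨a, b, c, d, hC⟩ := cycleGraph_four_isIndContained_iff.1 h
  exact ⟨_, ⟨a, b, hC.1, rfl⟩,
    pathGraph_four_isIndContained_iff.2 ⟨c, a, b, d, hC.isInducedP4_pivotEdge⟩⟩

lemma exists_pivotStep_cycleGraph_four_of_dart (h : dart ⊴ G) :
    ∃ G', PivotStep G G' ∧ cycleGraph 4 ⊴ G' := by
  obtain ⟨a, b, c, d, e, hD⟩ := dart_isIndContained_iff.1 h
  exact ⟨_, ⟨a, b, hD.1, rfl⟩,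
    cycleGraph_four_isIndContained_iff.2 ⟨a, c, e, d, hD.isInducedC4_pivotEdge⟩⟩

end PivotPatterns

/-- Every cell `f ⁻¹' {i}` is a clique, the cell `f ⁻¹' {k}` is joined to all other vertices,
and there are no further edges. -/
def cellGraph {ι : Type*} (f : V → ι) (k : ι) : SimpleGraph V where
  Adj x y := x ≠ y ∧ (f x = k ∨ f y = k ∨ f x = f y)
  symm := ⟨fun _ _ h ↦ ⟨h.1.symm, by rcases h.2 with h | h | h <;> simp [h]⟩⟩
  loopless := ⟨fun _ h ↦ h.1 rfl⟩

def P3MiddlesUniversal (G : SimpleGraph V) : Prop :=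
  ∀ ⦃x y z⦄, G.Adj x y → G.Adj y z → ¬ G.Adj x z → x ≠ z → G.IsUniversal y

section CellGraph

variable {ι : Type*} {f : V → ι} {k : ι} {u v : V}

@[simp] lemma cellGraph_adj {x y : V} :
    (cellGraph f k).Adj x y ↔ x ≠ y ∧ (f x = k ∨ f y = k ∨ f x = f y) :=
  Iff.rfl

lemma pivotEdge_cellGraph_of_centre (hu : f u = k) (hv : f v ≠ k) (huv : u ≠ v) :
    pivotEdge (cellGraph f k) u v = cellGraph f (f v) := by
  have huv' : (cellGraph f k).Adj u v := by simp [huv, hu]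
  refine pivotEdge_eq_of_adj_iff huv' (by simp [huv]) (fun y hyu hyv ↦ ?_)
    (fun y hyu hyv ↦ ?_) (fun x y hxu hxv hyu hyv hxy ↦ ?_)
  · by_cases f y = k <;> by_cases f y = f v <;> simp_all [eq_comm, Ne.symm hyu, Ne.symm hyv]
  · by_cases f y = k <;> by_cases f y = f v <;> simp_all [eq_comm, Ne.symm hyu, Ne.symm hyv]
  · simp only [PivotToggles, Xor, cellGraph_adj]
    by_cases f x = k <;> by_cases f y = k <;> by_cases f x = f y <;> by_cases f x = f v <;>
      by_cases f y = f v <;> simp_all [eq_comm, Ne.symm hxu, Ne.symm hxv, Ne.symm hyu,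
        Ne.symm hyv]

lemma exists_pivotEdge_cellGraph_eq (huv : (cellGraph f k).Adj u v) :
    ∃ k', pivotEdge (cellGraph f k) u v = cellGraph f k' := by
  by_cases hfuv : f u = f v
  · exact ⟨k, pivotEdge_eq_self huv fun w hwu hwv ↦ by simp [hfuv, hwu.symm, hwv.symm]⟩
  rcases huv.2 with hu | hv | hfuv'
  · exact ⟨f v, pivotEdge_cellGraph_of_centre hu (fun hv ↦ hfuv (hu.trans hv.symm)) huv.1⟩
  · rw [pivotEdge_comm huv]
    exact ⟨f u, pivotEdge_cellGraph_of_centre hv (fun hu ↦ hfuv (hu.trans hv.symm)) huv.1.symm⟩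
  · exact absurd hfuv' hfuv

lemma cellGraph_p3MiddlesUniversal : P3MiddlesUniversal (cellGraph f k) := by
  intro x y z hxy hyz hxz hne w hyw
  refine ⟨hyw, Or.inl ?_⟩
  simp only [cellGraph_adj, hne, ne_eq, not_false_eq_true, true_and, not_or] at hxy hyz hxz
  grind

end CellGraph

def IsP4C4DartFree (G : SimpleGraph V) : Prop :=
  ¬ pathGraph 4 ⊴ G ∧ ¬ cycleGraph 4 ⊴ G ∧ ¬ dart ⊴ G

section Structure

variable {G : SimpleGraph V} {u v x y : V}

lemma IsP4C4DartFree.anti {G' : SimpleGraph W} (h : IsP4C4DartFree G) (h' : G' ⊴ G) :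
    IsP4C4DartFree G' :=
  ⟨fun hP ↦ h.1 (hP.trans h'), fun hC ↦ h.2.1 (hC.trans h'), fun hD ↦ h.2.2 (hD.trans h')⟩

lemma IsP4C4DartFree.induce (h : IsP4C4DartFree G) (s : Set V) : IsP4C4DartFree (G.induce s) :=
  h.anti ⟨Embedding.induce s⟩

lemma P3MiddlesUniversal.isP4C4DartFree (hG : P3MiddlesUniversal G) : IsP4C4DartFree G := by
  refine ⟨?_, ?_, ?_⟩
  · rw [pathGraph_four_isIndContained_iff]
    rintro ⟨a, b, c, d, hab, hbc, -, hac, -, hbd, hac', -, hbd'⟩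
    exact hbd (hG hab hbc hac hac' hbd')
  · rw [cycleGraph_four_isIndContained_iff]
    rintro ⟨a, b, c, d, hab, hbc, -, -, hac, hbd, hac', hbd'⟩
    exact hbd (hG hab hbc hac hac' hbd')
  · rw [dart_isIndContained_iff]
    rintro ⟨a₀, a₁, a₂, a₃, a₄, -, -, -, h12, h13, -, h23, h14, -, -, h23', h14', -, -⟩
    exact h14 (hG h12.symm h13 h23 h23' h14')

lemma P3MiddlesUniversal.insert_neighborSet_eq (hG : P3MiddlesUniversal G) (hxy : G.Adj x y)
    (hx : ¬ G.IsUniversal x) (hy : ¬ G.IsUniversal y) :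
    insert x (G.neighborSet x) = insert y (G.neighborSet y) := by
  have key : ∀ {x y}, G.Adj x y → ¬ G.IsUniversal x →
      insert x (G.neighborSet x) ⊆ insert y (G.neighborSet y) := by
    rintro x y hxy hx z (rfl | hxz)
    · exact Or.inr hxy.symm
    by_contra hyz
    simp only [Set.mem_insert_iff, mem_neighborSet, not_or] at hyz
    exact hx (hG hxy.symm hxz hyz.2 (Ne.symm hyz.1))
  exact (key hxy hx).antisymm (key hxy.symm hy)

lemma P3MiddlesUniversal.eq_cellGraph (hG : P3MiddlesUniversal G) :
    G = cellGraph (fun x ↦ insert x (G.neighborSet x)) Set.univ := by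
  ext x y
  simp only [cellGraph_adj, insert_neighborSet_eq_univ]
  refine ⟨fun hxy ↦ ⟨hxy.ne, ?_⟩, ?_⟩
  · by_cases hx : G.IsUniversal x
    · exact Or.inl hx
    by_cases hy : G.IsUniversal y
    · exact Or.inr (Or.inl hy)
    exact Or.inr (Or.inr (hG.insert_neighborSet_eq hxy hx hy))
  · rintro ⟨hne, hx | hy | heq⟩
    · exact hx hne
    · exact (hy hne.symm).symm
    · have hx : x ∈ insert y (G.neighborSet y) := heq ▸ Set.mem_insert x _
      exact (hx.resolve_left hne).symm

lemma P3MiddlesUniversal.pivotEdge (hG : P3MiddlesUniversal G) (huv : G.Adj u v) :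
    P3MiddlesUniversal (pivotEdge G u v) := by
  rw [hG.eq_cellGraph] at huv ⊢
  obtain ⟨k, hk⟩ := exists_pivotEdge_cellGraph_eq huv
  rw [hk]
  exact cellGraph_p3MiddlesUniversal

lemma IsCliqueStar.p3MiddlesUniversal (h : IsCliqueStar G) : P3MiddlesUniversal G := by
  rcases h with rfl | ⟨K, Ls, -, -, -, hcover, -, -, hK, hLcl, hKLs, hLL⟩
  · exact fun x _ z _ _ hxz hne ↦ absurd ((top_adj x z).2 hne) hxz
  have hmem : ∀ x, x ∉ K → ∃ L ∈ Ls, x ∈ L := fun x hx ↦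
    ((hcover ▸ Set.mem_univ x : x ∈ K ∪ ⋃₀ Ls).resolve_left hx)
  have huniv : ∀ y ∈ K, G.IsUniversal y := by
    intro y hy w hyw
    by_cases hw : w ∈ K
    · exact hK hy hw hyw
    · exact hKLs y hy w (hmem w hw)
  have hsame : ∀ L ∈ Ls, ∀ y ∈ L, ∀ x, G.Adj x y → x ∉ K → x ∈ L := by
    intro L hL y hy x hxy hx
    obtain ⟨L', hL', hxL'⟩ := hmem x hx
    by_cases hLL' : L' = L
    · exact hLL' ▸ hxL'
    · exact absurd hxy (hLL L' hL' L hL hLL' x hxL' y hy)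
  intro x y z hxy hyz hxz hne
  by_cases hy : y ∈ K
  · exact huniv y hy
  obtain ⟨L, hL, hyL⟩ := hmem y hy
  have hx : x ∉ K := fun hx ↦ hxz (huniv x hx hne)
  have hz : z ∉ K := fun hz ↦ hxz (huniv z hz hne.symm).symm
  exact absurd (hLcl L hL (hsame L hL y hyL x hxy hx) (hsame L hL y hyL z hyz.symm hz) hne) hxz

/-- The cells are the closed neighbourhoods of the non-universal vertices, minus the universal
vertices, which form the centre. -/
lemma P3MiddlesUniversal.isCliqueStar (hG : P3MiddlesUniversal G) (hconn : G.Preconnected) :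
    IsCliqueStar G := by
  by_cases htop : G = ⊤
  · exact Or.inl htop
  right
  set K := G.universalVerts
  set block : V → Set V := fun x ↦ insert x (G.neighborSet x) \ K with hblock_def
  have hblock : ∀ {x y}, x ∉ K → y ∈ block x → block y = block x := by
    rintro x y hx ⟨rfl | hxy, hy⟩
    · rfl
    · simp only [hblock_def, hG.insert_neighborSet_eq hxy hx hy]
  obtain ⟨x₀, hx₀⟩ : ∃ x, x ∉ K := by
    by_contra! h
    exact htop (eq_top_iff_forall_isUniversal.2 h)
  obtain ⟨z₀, hne₀, hadj₀⟩ : ∃ z, x₀ ≠ z ∧ ¬ G.Adj x₀ z := by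
    by_contra! h
    exact hx₀ h
  obtain ⟨p, hp⟩ := (hconn x₀ z₀).exists_walk_length_eq_dist
  have hdist : 1 < G.dist x₀ z₀ := by
    have h0 := (hconn x₀ z₀).pos_dist_of_ne hne₀
    have h1 : G.dist x₀ z₀ ≠ 1 := fun h ↦ hadj₀ (dist_eq_one_iff_adj.1 h)
    omega
  obtain ⟨a, b, c, hab, hbc, hac, hac'⟩ := p.exists_adj_adj_not_adj_ne hp hdist
  refine ⟨K, block '' Kᶜ, ⟨b, hG hab hbc hac hac'⟩, ⟨_, x₀, hx₀, rfl⟩, ?_, ?_, ?_, ?_,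
    isClique_universalVerts G, ?_, ?_, ?_⟩
  · rintro _ ⟨x, hx, rfl⟩
    exact ⟨x, Set.mem_insert x _, hx⟩
  · refine Set.eq_univ_of_forall fun x ↦ ?_
    by_cases hx : x ∈ K
    · exact Or.inl hx
    · exact Or.inr ⟨block x, ⟨x, hx, rfl⟩, Set.mem_insert x _, hx⟩
  · rintro _ ⟨x, -, rfl⟩
    exact Set.disjoint_sdiff_right
  · rintro _ ⟨x₁, hx₁, rfl⟩ _ ⟨x₂, hx₂, rfl⟩ hne
    refine Set.disjoint_left.2 fun z hz₁ hz₂ ↦ hne ?_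
    rw [← hblock hx₁ hz₁, hblock hx₂ hz₂]
  · rintro _ ⟨x, hx, rfl⟩ y hy z hz hyz
    have hz' : z ∈ block y := hblock hx hy ▸ hz
    exact hz'.1.resolve_left hyz.symm
  · rintro x hx y ⟨_, ⟨z, -, rfl⟩, hy⟩
    exact hx (ne_of_mem_of_not_mem hx hy.2)
  · rintro _ ⟨x₁, hx₁, rfl⟩ _ ⟨x₂, hx₂, rfl⟩ hne y hy z hz hyz
    have hzy : z ∈ block y := ⟨Or.inr hyz, hz.2⟩
    exact hne (by rw [← hblock hx₁ hy, ← hblock hx₂ hz, hblock hy.2 hzy])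

end Structure

section Free

variable {G : SimpleGraph V}

lemma adj_of_adj_end_of_inducedPath (hP : ¬ pathGraph 4 ⊴ G) (hC : ¬ cycleGraph 4 ⊴ G)
    {w x y z : V} (hwx : G.Adj w x) (hxy : G.Adj x y) (hyz : G.Adj y z) (hxz : ¬ G.Adj x z)
    (hxz' : x ≠ z) (hwy : w ≠ y) : G.Adj w y := by
  by_contra hwy'
  have hwz' : w ≠ z := by rintro rfl; exact hwy' hyz.symm
  by_cases hwz : G.Adj w z
  · exact hC (cycleGraph_four_isIndContained_iff.2
      ⟨w, x, y, z, hwx, hxy, hyz, hwz.symm, hwy', hxz, hwy, hxz'⟩)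
  · exact hP (pathGraph_four_isIndContained_iff.2
      ⟨w, x, y, z, hwx, hxy, hyz, hwy', hwz, hxz, hwy, hwz', hxz'⟩)

lemma exists_adj_adj_not_adj_of_walk {w y : V} (p : G.Walk w y) (hwy : w ≠ y)
    (hyw : ¬ G.Adj y w) : ∃ t w', G.Adj y t ∧ G.Adj t w' ∧ ¬ G.Adj y w' ∧ w' ≠ y := by
  induction p with
  | nil => exact absurd rfl hwy
  | @cons a b c hab q ih =>
    by_cases hbc : b = c
    · subst hbc
      exact absurd hab.symm hyw
    by_cases hcb : G.Adj c b
    · exact ⟨b, a, hcb, hab.symm, hyw, hwy⟩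
    · exact ih hbc hcb

/-- If `y` had a non-neighbour, a vertex `w` at distance two from `y` would, together with the
induced path `x - y - z`, span an induced `P₄`, `C₄` or dart. -/
lemma IsP4C4DartFree.p3MiddlesUniversal (h : IsP4C4DartFree G) (hconn : G.Preconnected) :
    P3MiddlesUniversal G := by
  intro x y z hxy hyz hxz hxz' v hyv
  by_contra hyv'
  obtain ⟨t, w, hyt, htw, hyw, hwy⟩ :=
    exists_adj_adj_not_adj_of_walk (hconn v y).some hyv.symm (hyv' ·)
  have key : ∀ {a b}, G.Adj w a → G.Adj a y → G.Adj y b → ¬ G.Adj a b → a ≠ b → False :=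
    fun hwa hay hyb hab hab' ↦
      hyw (adj_of_adj_end_of_inducedPath h.1 h.2.1 hwa hay hyb hab hab' hwy).symm
  have hwx : ¬ G.Adj w x := fun hwx ↦ key hwx hxy hyz hxz hxz'
  have hwz : ¬ G.Adj w z := fun hwz ↦ key hwz hyz.symm hxy.symm (hxz ·.symm) hxz'.symm
  have htx : G.Adj t x := by
    by_contra htx
    exact key htw.symm hyt.symm hxy.symm htx (by rintro rfl; exact hwx htw.symm)
  have htz : G.Adj t z := by
    by_contra htz
    exact key htw.symm hyt.symm hyz htz (by rintro rfl; exact hwz htw.symm)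
  refine h.2.2 (dart_isIndContained_iff.2 ⟨t, y, x, z, w, hyt.symm, htx, htz, hxy.symm, hyz,
    htw, hxz, hyw, (hwx ·.symm), (hwz ·.symm), hxz', hwy.symm, ?_, ?_⟩)
  · rintro rfl; exact hyw hxy.symm
  · rintro rfl; exact hyw hyz

lemma mem_of_reachable_of_forall_adj {s : Set V} (hs : ∀ x y, G.Adj x y → x ∈ s → y ∈ s) {x y : V}
    (h : G.Reachable x y) (hx : x ∈ s) : y ∈ s := by
  obtain ⟨p⟩ := h
  induction p with
  | nil => exact hx
  | cons hab _ ih => exact ih (hs _ _ hab hx)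

lemma isIndContained_induce_of_mem {H : SimpleGraph W} (hH : H.Preconnected) {s : Set V}
    (hs : ∀ x y, G.Adj x y → x ∈ s → y ∈ s) (f : H ↪g G) {i : W} (hi : f i ∈ s) :
    H ⊴ G.induce s :=
  have hf : ∀ j, f j ∈ s := fun j ↦ mem_of_reachable_of_forall_adj hs ((hH i j).map f.toHom) hi
  isIndContained_of_adj_iff (fun j ↦ ⟨f j, hf j⟩)
    (fun _ _ h ↦ f.injective (congrArg Subtype.val h)) (fun _ _ ↦ f.map_adj_iff)

lemma isIndContained_induce_or_induce_compl {H : SimpleGraph W} (hH : H.Preconnected) (i : W)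
    {s : Set V} (hs : ∀ x y, G.Adj x y → (x ∈ s ↔ y ∈ s)) (h : H ⊴ G) :
    H ⊴ G.induce s ∨ H ⊴ G.induce sᶜ := by
  obtain ⟨f⟩ := h
  by_cases hi : f i ∈ s
  · exact Or.inl (isIndContained_induce_of_mem hH (fun x y hxy ↦ (hs x y hxy).1) f hi)
  · exact Or.inr (isIndContained_induce_of_mem hH (fun x y hxy ↦ mt (hs x y hxy).2) f hi)

lemma exists_isIndContained_induce_supp {H : SimpleGraph W} (hH : H.Preconnected) (i : W)
    (h : H ⊴ G) : ∃ c : G.ConnectedComponent, H ⊴ G.induce c.supp := by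
  obtain ⟨f⟩ := h
  exact ⟨G.connectedComponentMk (f i), isIndContained_induce_of_mem hH
    (fun _ _ hxy hx ↦ (ConnectedComponent.mem_supp_congr_adj _ hxy).1 hx) f rfl⟩

lemma IsP4C4DartFree.of_induce_of_induce_compl {s : Set V}
    (hs : ∀ x y, G.Adj x y → (x ∈ s ↔ y ∈ s)) (h : IsP4C4DartFree (G.induce s))
    (h' : IsP4C4DartFree (G.induce sᶜ)) : IsP4C4DartFree G :=
  ⟨fun hP ↦ (isIndContained_induce_or_induce_compl (pathGraph_preconnected 4) 0 hs hP).elim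
      h.1 h'.1,
    fun hC ↦ (isIndContained_induce_or_induce_compl cycleGraph_preconnected 0 hs hC).elim
      h.2.1 h'.2.1,
    fun hD ↦ (isIndContained_induce_or_induce_compl dart_preconnected 0 hs hD).elim
      h.2.2 h'.2.2⟩

lemma IsP4C4DartFree.of_forall_connectedComponent
    (h : ∀ c : G.ConnectedComponent, IsP4C4DartFree (G.induce c.supp)) : IsP4C4DartFree G := by
  refine ⟨fun hP ↦ ?_, fun hC ↦ ?_, fun hD ↦ ?_⟩
  · obtain ⟨c, hc⟩ := exists_isIndContained_induce_supp (pathGraph_preconnected 4) 0 hP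
    exact (h c).1 hc
  · obtain ⟨c, hc⟩ := exists_isIndContained_induce_supp cycleGraph_preconnected 0 hC
    exact (h c).2.1 hc
  · obtain ⟨c, hc⟩ := exists_isIndContained_induce_supp dart_preconnected 0 hD
    exact (h c).2.2 hc

lemma isP4C4DartFree_iff_forall_isCliqueStar :
    IsP4C4DartFree G ↔ ∀ c : G.ConnectedComponent, IsCliqueStar (G.induce c.supp) := by
  refine ⟨fun h c ↦ ?_, fun h ↦ .of_forall_connectedComponent fun c ↦
    (h c).p3MiddlesUniversal.isP4C4DartFree⟩
  have hconn := c.maximal_connected_induce_supp.prop.preconnected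
  exact ((h.induce _).p3MiddlesUniversal hconn).isCliqueStar hconn

/-- Pivoting inside the component `c` of `u` leaves the rest of the graph untouched, and
turns the clique-star on `c` into another clique-star. -/
lemma PivotStep.isP4C4DartFree {G' : SimpleGraph V} (hGG' : PivotStep G G')
    (h : IsP4C4DartFree G) : IsP4C4DartFree G' := by
  obtain ⟨u, v, huv, rfl⟩ := hGG'
  set c := G.connectedComponentMk u
  have hu : u ∈ c.supp := rfl
  have hv : v ∈ c.supp := (c.mem_supp_congr_adj huv).1 hu
  have hout : ∀ x ∉ c.supp, ∀ y, (pivotEdge G u v).Adj x y ↔ G.Adj x y := fun x hx _ ↦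
    pivotEdge_adj_of_not_adj huv (fun hux ↦ hx ((c.mem_supp_congr_adj hux).1 hu))
      (fun hvx ↦ hx ((c.mem_supp_congr_adj hvx).1 hv))
  refine .of_induce_of_induce_compl (s := c.supp) (fun x y hxy ↦ ?_) ?_ ?_
  · by_cases hx : x ∈ c.supp
    · by_cases hy : y ∈ c.supp
      · exact iff_of_true hx hy
      · exact c.mem_supp_congr_adj ((hout y hy x).1 hxy.symm).symm
    · exact c.mem_supp_congr_adj ((hout x hx y).1 hxy)
  · have hconn := c.maximal_connected_induce_supp.prop.preconnected
    have huv' : (G.induce c.supp).Adj ⟨u, hu⟩ ⟨v, hv⟩ := huv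
    rw [pivotEdge_induce hu hv]
    exact (((h.induce _).p3MiddlesUniversal hconn).pivotEdge huv').isP4C4DartFree
  · have hcompl : (pivotEdge G u v).induce c.suppᶜ = G.induce c.suppᶜ := by
      ext x y
      exact hout x x.2 y
    rw [hcompl]
    exact h.induce _

lemma PivotEquiv.isP4C4DartFree {G' : SimpleGraph V} (hGG' : PivotEquiv G G')
    (h : IsP4C4DartFree G) : IsP4C4DartFree G' := by
  induction hGG' with
  | refl => exact h
  | tail _ hstep ih => exact hstep.isP4C4DartFree ih

end Free

section PivotMinor

variable {G : SimpleGraph V}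

lemma hasInducedSubgraphIso_iff {H : SimpleGraph W} : HasInducedSubgraphIso G H ↔ H ⊴ G := by
  rw [isIndContained_iff_exists_iso_induce]
  exact exists_congr fun _ ↦ ⟨fun ⟨e⟩ ↦ ⟨e.symm⟩, fun ⟨e⟩ ↦ ⟨e.symm⟩⟩

lemma hasPivotMinor_iff {H : SimpleGraph W} :
    HasPivotMinor G H ↔ ∃ G', PivotEquiv G G' ∧ H ⊴ G' := by
  simp only [HasPivotMinor, HasPivotMinorOn, isIndContained_iff_exists_iso_induce]
  constructor
  · rintro ⟨s, G', hGG', ⟨e⟩⟩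
    exact ⟨G', hGG', s, ⟨e.symm⟩⟩
  · rintro ⟨G', hGG', s, ⟨e⟩⟩
    exact ⟨s, G', hGG', ⟨e.symm⟩⟩

lemma hasPivotMinor_pathGraph_four_iff :
    HasPivotMinor G (pathGraph 4) ↔ ¬ IsP4C4DartFree G := by
  rw [hasPivotMinor_iff]
  refine ⟨fun ⟨G', hGG', hP⟩ h ↦ (hGG'.isP4C4DartFree h).1 hP, fun h ↦ ?_⟩
  simp only [IsP4C4DartFree, not_and_or, not_not] at h
  rcases h with hP | hC | hD
  · exact ⟨G, .refl, hP⟩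
  · obtain ⟨G', hGG', hP⟩ := exists_pivotStep_pathGraph_four_of_cycleGraph hC
    exact ⟨G', .single hGG', hP⟩
  · obtain ⟨G₁, hGG₁, hC⟩ := exists_pivotStep_cycleGraph_four_of_dart hD
    obtain ⟨G₂, hG₁G₂, hP⟩ := exists_pivotStep_pathGraph_four_of_cycleGraph hC
    exact ⟨G₂, .tail (.single hGG₁) hG₁G₂, hP⟩

lemma hasPivotMinor_cycleGraph_four_iff :
    HasPivotMinor G (cycleGraph 4) ↔ ¬ IsP4C4DartFree G := by
  rw [hasPivotMinor_iff]
  refine ⟨fun ⟨G', hGG', hC⟩ h ↦ (hGG'.isP4C4DartFree h).2.1 hC, fun h ↦ ?_⟩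
  simp only [IsP4C4DartFree, not_and_or, not_not] at h
  rcases h with hP | hC | hD
  · obtain ⟨G', hGG', hC⟩ := exists_pivotStep_cycleGraph_four_of_pathGraph hP
    exact ⟨G', .single hGG', hC⟩
  · exact ⟨G, .refl, hC⟩
  · obtain ⟨G', hGG', hC⟩ := exists_pivotStep_cycleGraph_four_of_dart hD
    exact ⟨G', .single hGG', hC⟩

end PivotMinor

theorem P4_pivotMinorFree_iff_general {V : Type*} (G : SimpleGraph V) :
    (¬ HasPivotMinor G (SimpleGraph.pathGraph 4) ↔
      ¬ HasPivotMinor G (SimpleGraph.cycleGraph 4)) ∧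
    (¬ HasPivotMinor G (SimpleGraph.cycleGraph 4) ↔
      (¬ HasInducedSubgraphIso G (SimpleGraph.pathGraph 4) ∧
       ¬ HasInducedSubgraphIso G (SimpleGraph.cycleGraph 4) ∧
       ¬ HasInducedSubgraphIso G dart)) ∧
    ((¬ HasInducedSubgraphIso G (SimpleGraph.pathGraph 4) ∧
       ¬ HasInducedSubgraphIso G (SimpleGraph.cycleGraph 4) ∧
       ¬ HasInducedSubgraphIso G dart) ↔
      ∀ c : G.ConnectedComponent, IsCliqueStar (G.induce c.supp)) := by
  have hP : ¬ HasPivotMinor G (pathGraph 4) ↔ IsP4C4DartFree G := by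
    rw [hasPivotMinor_pathGraph_four_iff, not_not]
  have hC : ¬ HasPivotMinor G (cycleGraph 4) ↔ IsP4C4DartFree G := by
    rw [hasPivotMinor_cycleGraph_four_iff, not_not]
  have hI : (¬ HasInducedSubgraphIso G (pathGraph 4) ∧
      ¬ HasInducedSubgraphIso G (cycleGraph 4) ∧ ¬ HasInducedSubgraphIso G dart) ↔
      IsP4C4DartFree G := by
    simp only [hasInducedSubgraphIso_iff, IsP4C4DartFree]
  exact ⟨hP.trans hC.symm, hC.trans hI.symm, hI.trans isP4C4DartFree_iff_forall_isCliqueStar⟩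

/-- For every finite simple graph `G` the following are equivalent:
(i) no pivot-minor isomorphic to `P₄`; (ii) no pivot-minor isomorphic to `C₄`;
(iii) no induced subgraph isomorphic to `P₄`, `C₄` or the dart; (iv) every connected
component of `G` is a clique-star. -/
theorem P4_pivotMinorFree_iff {V : Type*} [Fintype V] (G : SimpleGraph V) :
    (¬ HasPivotMinor G (SimpleGraph.pathGraph 4) ↔
      ¬ HasPivotMinor G (SimpleGraph.cycleGraph 4)) ∧
    (¬ HasPivotMinor G (SimpleGraph.cycleGraph 4) ↔
      (¬ HasInducedSubgraphIso G (SimpleGraph.pathGraph 4) ∧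
       ¬ HasInducedSubgraphIso G (SimpleGraph.cycleGraph 4) ∧
       ¬ HasInducedSubgraphIso G dart)) ∧
    ((¬ HasInducedSubgraphIso G (SimpleGraph.pathGraph 4) ∧
       ¬ HasInducedSubgraphIso G (SimpleGraph.cycleGraph 4) ∧
       ¬ HasInducedSubgraphIso G dart) ↔
      ∀ c : G.ConnectedComponent, IsCliqueStar (G.induce c.supp)) :=
  P4_pivotMinorFree_iff_general G
end

section
/- Let G be a finite simple graph, let xy be an edge of G, and let v and w be adjacent twins in G. Then v and w are adjacent twins in G∧xy. -/
/-!  Basic notions: local complementation, edge pivot, pivot-equivalence, pivot-minors. -/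

variable {V : Type*} {W : Type*}

/-! Unfolding the three local complementations, `G ∧ xy` exchanges the neighbourhoods of `x`
and `y`, and for `a, b ∉ {x, y}` it toggles `ab` exactly when `a` and `b` see `x` and `y` in
crossed patterns. Adjacent twins `v, w` see `x` and `y` alike, so when `{x, y}` avoids `{v, w}`
nothing in `G ∧ xy` separates them. When `xy` meets `{v, w}`, the symmetry `G ∧ xy = G ∧ yx`
reduces to `x = v`, and then `y` (if not `w`) is a common neighbour of `v` and `w`, which makes
the toggle at `w` turn its neighbourhood into that of `y`, the new neighbourhood of `v`. -/

section Pivot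

variable {G : SimpleGraph V} {x y a b : V}

-- Each adjacency `ab` of a pivot is a Boolean function of the adjacencies among `x`, `y`, `a`, `b`.
lemma pivotEdge_comm_s15 (hxy : G.Adj x y) : pivotEdge G x y = pivotEdge G y x := by
  ext a b
  simp only [pivotEdge, localComp]
  grind (splits := 30) [G.adj_comm, G.irrefl, hxy.ne]

lemma pivotEdge_adj_self_s15 (hxy : G.Adj x y) : (pivotEdge G x y).Adj x y := by
  simp only [pivotEdge, localComp]
  grind [G.adj_comm, G.irrefl, hxy.ne]

lemma pivotEdge_adj_left_s15 (hxy : G.Adj x y) (hbx : b ≠ x) (hby : b ≠ y) :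
    (pivotEdge G x y).Adj x b ↔ G.Adj y b := by
  simp only [pivotEdge, localComp]
  grind [G.adj_comm, G.irrefl, hxy.ne]

lemma pivotEdge_adj_right_s15 (hxy : G.Adj x y) (hbx : b ≠ x) (hby : b ≠ y) :
    (pivotEdge G x y).Adj y b ↔ G.Adj x b := by
  rw [pivotEdge_comm_s15 hxy]
  exact pivotEdge_adj_left_s15 hxy.symm hby hbx

lemma pivotEdge_adj_of_ne_s15 (hxy : G.Adj x y) (hax : a ≠ x) (hay : a ≠ y) (hbx : b ≠ x)
    (hby : b ≠ y) (hab : a ≠ b) :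
    (pivotEdge G x y).Adj a b ↔
      (G.Adj a b ↔ ((G.Adj x a ∧ G.Adj y b) ↔ (G.Adj y a ∧ G.Adj x b))) := by
  simp only [pivotEdge, localComp]
  grind [G.adj_comm, G.irrefl, hxy.ne]

end Pivot

def IsAdjTwins (G : SimpleGraph V) (v w : V) : Prop :=
  G.Adj v w ∧ ∀ z, z ≠ v → z ≠ w → (G.Adj v z ↔ G.Adj w z)

namespace IsAdjTwins

variable {G : SimpleGraph V} {x y v w z : V}

lemma symm (h : IsAdjTwins G v w) : IsAdjTwins G w v :=
  ⟨h.1.symm, fun z hzw hzv => (h.2 z hzv hzw).symm⟩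

lemma adj_iff (h : IsAdjTwins G v w) (hzv : z ≠ v) (hzw : z ≠ w) : G.Adj z v ↔ G.Adj z w := by
  rw [G.adj_comm, G.adj_comm z w]
  exact h.2 z hzv hzw

lemma pivotEdge_self (h : IsAdjTwins G v w) : IsAdjTwins (pivotEdge G v w) v w := by
  refine ⟨pivotEdge_adj_self_s15 h.1, fun z hzv hzw => ?_⟩
  rw [pivotEdge_adj_left_s15 h.1 hzv hzw, pivotEdge_adj_right_s15 h.1 hzv hzw]
  exact (h.2 z hzv hzw).symm

lemma pivotEdge_left (h : IsAdjTwins G v w) (hvy : G.Adj v y) (hyw : y ≠ w) :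
    IsAdjTwins (pivotEdge G v y) v w := by
  have hyv : y ≠ v := hvy.ne.symm
  have hwv : w ≠ v := h.1.ne.symm
  have hvw := h.1
  have hwy : G.Adj w y := (h.2 y hyv hyw).1 hvy
  refine ⟨(pivotEdge_adj_left_s15 hvy hwv hyw.symm).2 hwy.symm, fun z hzv hzw => ?_⟩
  rcases eq_or_ne z y with rfl | hzy
  · exact iff_of_true (pivotEdge_adj_self_s15 hvy)
      ((pivotEdge_adj_right_s15 hvy hwv hyw.symm).2 hvw).symm
  · rw [pivotEdge_adj_left_s15 hvy hzv hzy, pivotEdge_adj_of_ne_s15 hvy hwv hyw.symm hzv hzy hzw.symm]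
    have hvz := h.2 z hzv hzw
    tauto

lemma pivotEdge_of_disjoint (h : IsAdjTwins G v w) (hxy : G.Adj x y) (hxv : x ≠ v) (hxw : x ≠ w)
    (hyv : y ≠ v) (hyw : y ≠ w) : IsAdjTwins (pivotEdge G x y) v w := by
  have hx := h.adj_iff hxv hxw
  have hy := h.adj_iff hyv hyw
  have hvw := h.1
  refine ⟨?_, fun z hzv hzw => ?_⟩
  · rw [pivotEdge_adj_of_ne_s15 hxy hxv.symm hyv.symm hxw.symm hyw.symm hvw.ne]
    tauto
  rcases eq_or_ne z x with rfl | hzx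
  · rw [(pivotEdge G z y).adj_comm, (pivotEdge G z y).adj_comm w,
      pivotEdge_adj_left_s15 hxy hxv.symm hyv.symm, pivotEdge_adj_left_s15 hxy hxw.symm hyw.symm]
    exact hy
  rcases eq_or_ne z y with rfl | hzy
  · rw [(pivotEdge G x z).adj_comm, (pivotEdge G x z).adj_comm w,
      pivotEdge_adj_right_s15 hxy hxv.symm hyv.symm, pivotEdge_adj_right_s15 hxy hxw.symm hyw.symm]
    exact hx
  rw [pivotEdge_adj_of_ne_s15 hxy hxv.symm hyv.symm hzx hzy hzv.symm,
    pivotEdge_adj_of_ne_s15 hxy hxw.symm hyw.symm hzx hzy hzw.symm]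
  have hvz := h.2 z hzv hzw
  tauto

end IsAdjTwins

theorem adjacentTwins_pivot_general {V : Type*} (G : SimpleGraph V)
    (x y v w : V) (hxy : G.Adj x y) (hvw : G.Adj v w)
    (htwin : ∀ z, z ≠ v → z ≠ w → (G.Adj v z ↔ G.Adj w z)) :
    (pivotEdge G x y).Adj v w ∧
      ∀ z, z ≠ v → z ≠ w →
        ((pivotEdge G x y).Adj v z ↔ (pivotEdge G x y).Adj w z) := by
  have h : IsAdjTwins G v w := ⟨hvw, htwin⟩
  show IsAdjTwins (pivotEdge G x y) v w
  rcases eq_or_ne x v with rfl | hxv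
  · rcases eq_or_ne y w with rfl | hyw
    · exact h.pivotEdge_self
    · exact h.pivotEdge_left hxy hyw
  rcases eq_or_ne x w with rfl | hxw
  · rcases eq_or_ne y v with rfl | hyv
    · exact h.symm.pivotEdge_self.symm
    · exact (h.symm.pivotEdge_left hxy hyv).symm
  rcases eq_or_ne y v with rfl | hyv
  · rw [pivotEdge_comm_s15 hxy]
    exact h.pivotEdge_left hxy.symm hxw
  rcases eq_or_ne y w with rfl | hyw
  · rw [pivotEdge_comm_s15 hxy]
    exact (h.symm.pivotEdge_left hxy.symm hxv).symm
  exact h.pivotEdge_of_disjoint hxy hxv hxw hyv hyw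

/-- Let `xy` be an edge of `G` and let `v, w` be adjacent twins
in `G`. Then `v` and `w` are adjacent twins in `G ∧ xy`. -/
theorem adjacentTwins_pivot {V : Type*} [Fintype V] (G : SimpleGraph V)
    (x y v w : V) (hxy : G.Adj x y) (hvw : G.Adj v w)
    (htwin : ∀ z, z ≠ v → z ≠ w → (G.Adj v z ↔ G.Adj w z)) :
    (pivotEdge G x y).Adj v w ∧
      ∀ z, z ≠ v → z ≠ w →
        ((pivotEdge G x y).Adj v z ↔ (pivotEdge G x y).Adj w z) :=
  adjacentTwins_pivot_general G x y v w hxy hvw htwin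
end
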